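/- arXiv:1808.02203 — 3 statements merged into one kernel-verified Lean document; each statement's English description precedes it below -/
import Mathlib

section
/- (Abstract form of the key proposition relating multiplicities for GU and U.) Let G be a group and (π, V) a representation of G on a complex vector space. Let H ≤ G be a subgroup, Z ≤ H a subgroup with π(z) acting as the scalar ω(z) on V for all z ∈ Z, H₁ ≤ H a subgroup, and h ∈ H an element with h ∉ H₁Z such that H = H₁Z ∪ hH₁Z. Let ω, ω' : H → ℂ^× be group homomorphisms that agree on H₁ and on Z and satisfy ω'(h) = −ω(h). For a subgroup K ≤ H and a homomorphism χ : K → ℂ^×, write Hom_K(V, χ) for the space of linear functionals l : V → ℂ with l(π(k)v) = χ(k)·l(v) for all k ∈ K, v ∈ V. Then Hom_{H₁}(V, ω|_{H₁}) = Hom_H(V, ω) ⊕ Hom_H(V, ω') (an internal direct sum of subspaces); in particular dim Hom_{H₁}(V, ω|_{H₁}) = dim Hom_H(V, ω) + dim Hom_H(V, ω'). -/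
noncomputable section

/-- `Hom_K(V, χ)`: the space of linear functionals `l : V → ℂ` with
`l(π(k)v) = χ(k)·l(v)` for all `k ∈ K`, `v ∈ V`. -/
def homSpace {G V : Type*} [Group G] [AddCommGroup V] [Module ℂ V]
    (π : Representation ℂ G V) (K : Subgroup G) (χ : K →* ℂˣ) :
    Submodule ℂ (V →ₗ[ℂ] ℂ) where
  carrier := {l | ∀ (k : K) (v : V), l (π (k : G) v) = (χ k : ℂ) * l v}
  add_mem' := by
    intro a b ha hb k v
    simp only [LinearMap.add_apply, ha k v, hb k v]
    ring
  zero_mem' := by intro k v; simp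
  smul_mem' := by
    intro c a ha k v
    simp only [LinearMap.smul_apply, ha k v, smul_eq_mul]
    ring

/-- abstract form of the key proposition relating the multiplicities
for `GU` and `U`:  `Hom_{H₁}(V, ω|_{H₁}) = Hom_H(V, ω) ⊕ Hom_H(V, ω')`. -/
theorem statement10 {G V : Type*} [Group G] [AddCommGroup V] [Module ℂ V]
    (π : Representation ℂ G V)
    (H Z H₁ : Subgroup G) (hZH : Z ≤ H) (hH₁H : H₁ ≤ H)
    (h : G) (hh : h ∈ H)
    (ω ω' : H →* ℂˣ)
    -- `π(z)` acts as the scalar `ω(z)` for `z ∈ Z`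
    (hscalar : ∀ z (hz : z ∈ Z), ∀ v : V, π z v = (ω ⟨z, hZH hz⟩ : ℂ) • v)
    -- `h ∉ H₁Z` and `H = H₁Z ∪ hH₁Z`
    (hnotin : ¬ ∃ a ∈ H₁, ∃ z ∈ Z, h = a * z)
    (hcover : ∀ x ∈ H,
      (∃ a ∈ H₁, ∃ z ∈ Z, x = a * z) ∨ (∃ a ∈ H₁, ∃ z ∈ Z, x = h * (a * z)))
    -- `ω` and `ω'` agree on `H₁` and on `Z`, and `ω'(h) = -ω(h)`
    (hagree₁ : ∀ x (hx : x ∈ H₁), ω ⟨x, hH₁H hx⟩ = ω' ⟨x, hH₁H hx⟩)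
    (hagreeZ : ∀ z (hz : z ∈ Z), ω ⟨z, hZH hz⟩ = ω' ⟨z, hZH hz⟩)
    (hsign : ((ω' ⟨h, hh⟩ : ℂˣ) : ℂ) = -((ω ⟨h, hh⟩ : ℂˣ) : ℂ)) :
    homSpace π H₁ (ω.comp (Subgroup.inclusion hH₁H)) =
        homSpace π H ω ⊔ homSpace π H ω' ∧
    Disjoint (homSpace π H ω) (homSpace π H ω') ∧
    Module.rank ℂ (homSpace π H₁ (ω.comp (Subgroup.inclusion hH₁H))) =
      Module.rank ℂ (homSpace π H ω) + Module.rank ℂ (homSpace π H ω') := by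
  classical
  have hωh0 : ((ω ⟨h, hh⟩ : ℂˣ) : ℂ) ≠ 0 := Units.ne_zero _
  -- any linear functional is automatically `ω`-equivariant on `Z`
  have hZl : ∀ (l : V →ₗ[ℂ] ℂ) (z : G) (hz : z ∈ Z) (v : V),
      l (π z v) = ((ω ⟨z, hZH hz⟩ : ℂˣ) : ℂ) * l v := by
    intro l z hz v
    rw [hscalar z hz v, map_smul, smul_eq_mul]
  have hmul : ∀ (x y : G) (v : V), π (x * y) v = π x (π y v) := by
    intro x y v; rw [map_mul]; rfl
  -- membership criteria
  have memC : ∀ l : V →ₗ[ℂ] ℂ,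
      l ∈ homSpace π H₁ (ω.comp (Subgroup.inclusion hH₁H)) ↔
      ∀ (a : G) (ha : a ∈ H₁) (v : V),
        l (π a v) = ((ω ⟨a, hH₁H ha⟩ : ℂˣ) : ℂ) * l v := by
    intro l
    constructor
    · intro hl a ha v; exact hl ⟨a, ha⟩ v
    · intro hl k v; exact hl k.1 k.2 v
  have memA : ∀ (χ : H →* ℂˣ) (l : V →ₗ[ℂ] ℂ),
      l ∈ homSpace π H χ ↔
      ∀ (x : G) (hx : x ∈ H) (v : V),
        l (π x v) = ((χ ⟨x, hx⟩ : ℂˣ) : ℂ) * l v := by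
    intro χ l
    constructor
    · intro hl x hx v; exact hl ⟨x, hx⟩ v
    · intro hl k v; exact hl k.1 k.2 v
  -- `Hom_H(ω) ≤ Hom_{H₁}(ω|)`
  have hAC : homSpace π H ω ≤ homSpace π H₁ (ω.comp (Subgroup.inclusion hH₁H)) := by
    intro l hl
    rw [memC]
    intro a ha v
    exact (memA ω l).1 hl a (hH₁H ha) v
  -- `Hom_H(ω') ≤ Hom_{H₁}(ω|)`
  have hBC : homSpace π H ω' ≤ homSpace π H₁ (ω.comp (Subgroup.inclusion hH₁H)) := by
    intro l hl
    rw [memC]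
    intro a ha v
    rw [(memA ω' l).1 hl a (hH₁H ha) v, hagree₁ a ha]
  -- disjointness
  have hdisj : Disjoint (homSpace π H ω) (homSpace π H ω') := by
    rw [Submodule.disjoint_def]
    intro l hlA hlB
    ext v
    have e1 := (memA ω l).1 hlA h hh v
    have e2 := (memA ω' l).1 hlB h hh v
    rw [hsign] at e2
    have h4 : ((ω ⟨h, hh⟩ : ℂˣ) : ℂ) * (2 * l v) = 0 := by
      linear_combination e2 - e1
    simp only [LinearMap.zero_apply]
    rcases mul_eq_zero.mp h4 with h' | h'
    · exact absurd h' hωh0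
    · rcases mul_eq_zero.mp h' with h'' | h''
      · exact absurd h'' two_ne_zero
      · exact h''
  -- the main inclusion
  have hCsub : homSpace π H₁ (ω.comp (Subgroup.inclusion hH₁H)) ≤
      homSpace π H ω ⊔ homSpace π H ω' := by
    intro l hl
    rw [memC] at hl
    set m : V →ₗ[ℂ] ℂ := l ∘ₗ (π h) with hm_def
    have hm_apply : ∀ v, m v = l (π h v) := fun v => rfl
    -- `m` is `ω`-equivariant on `H₁`
    have hm1 : ∀ (a : G) (ha : a ∈ H₁) (v : V),
        m (π a v) = ((ω ⟨a, hH₁H ha⟩ : ℂˣ) : ℂ) * m v := by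
      intro a ha v
      rcases hcover (h * a * h⁻¹) (mul_mem (mul_mem hh (hH₁H ha)) (inv_mem hh))
        with ⟨b, hb, z, hz, hceq⟩ | ⟨b, hb, z, hz, hceq⟩
      · -- case: h a h⁻¹ = b z, so h a = b (z h)
        have heq2 : h * a = b * (z * h) := by
          have e : h * a = (h * a * h⁻¹) * h := by group
          rw [e, hceq]; group
        have estep : m (π a v) = ((ω ⟨b, hH₁H hb⟩ : ℂˣ) : ℂ) *
            (((ω ⟨z, hZH hz⟩ : ℂˣ) : ℂ) * m v) := by
          rw [hm_apply, ← hmul, heq2, hmul, hmul, hl b hb, hZl l z hz, hm_apply]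
        rw [estep]
        -- key identity: ω(b) ω(z) ω(h) = ω(h) ω(a)
        have ein : (⟨b, hH₁H hb⟩ : H) * ⟨z, hZH hz⟩ * ⟨h, hh⟩ =
            (⟨h, hh⟩ : H) * ⟨a, hH₁H ha⟩ := by
          ext
          show b * z * h = h * a
          rw [heq2]; group
        have evals := congrArg (fun t => ((ω t : ℂˣ) : ℂ)) ein
        simp only [map_mul, Units.val_mul] at evals
        have := mul_right_cancel₀ hωh0 (by
          rw [show ((ω ⟨b, hH₁H hb⟩ : ℂˣ) : ℂ) * ((ω ⟨z, hZH hz⟩ : ℂˣ) : ℂ) *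
            ((ω ⟨h, hh⟩ : ℂˣ) : ℂ) = ((ω ⟨h, hh⟩ : ℂˣ) : ℂ) * ((ω ⟨a, hH₁H ha⟩ : ℂˣ) : ℂ)
            from evals]
          ring : ((ω ⟨b, hH₁H hb⟩ : ℂˣ) : ℂ) * ((ω ⟨z, hZH hz⟩ : ℂˣ) : ℂ) *
            ((ω ⟨h, hh⟩ : ℂˣ) : ℂ) = ((ω ⟨a, hH₁H ha⟩ : ℂˣ) : ℂ) * ((ω ⟨h, hh⟩ : ℂˣ) : ℂ))
        rw [← this]; ring
      · -- case: h a h⁻¹ = h (b z), so h = z⁻¹ (b⁻¹ a)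
        have heq2 : h = z⁻¹ * (b⁻¹ * a) := by
          have e0 : a * h⁻¹ = b * z := mul_left_cancel (by rw [← mul_assoc, hceq])
          have e1 : h = (b * z)⁻¹ * a := by rw [← e0]; group
          rw [e1]; group
        have hc1 : b⁻¹ * a ∈ H₁ := mul_mem (inv_mem hb) ha
        have hz1 : z⁻¹ ∈ Z := inv_mem hz
        have hml : ∀ w : V, m w = ((ω ⟨z⁻¹, hZH hz1⟩ : ℂˣ) : ℂ) *
            (((ω ⟨b⁻¹ * a, hH₁H hc1⟩ : ℂˣ) : ℂ) * l w) := by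
          intro w
          rw [hm_apply]
          conv_lhs => rw [heq2]
          rw [hmul, hZl l z⁻¹ hz1, hl (b⁻¹ * a) hc1]
        rw [hml, hml, hl a ha]
        ring
    -- `m (π h v) = ω(h)^2 l v`
    have hm2 : ∀ v : V, m (π h v) = ((ω ⟨h, hh⟩ : ℂˣ) : ℂ) ^ 2 * l v := by
      intro v
      rcases hcover (h * h) (mul_mem hh hh) with ⟨a, ha, z, hz, heq⟩ | ⟨a, ha, z, hz, heq⟩
      · have estep : m (π h v) = ((ω ⟨a, hH₁H ha⟩ : ℂˣ) : ℂ) *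
            (((ω ⟨z, hZH hz⟩ : ℂˣ) : ℂ) * l v) := by
          rw [hm_apply, ← hmul, heq, hmul, hl a ha, hZl l z hz]
        rw [estep]
        have ein : (⟨a, hH₁H ha⟩ : H) * ⟨z, hZH hz⟩ = (⟨h, hh⟩ : H) * ⟨h, hh⟩ := by
          ext; exact heq.symm
        have evals := congrArg (fun t => ((ω t : ℂˣ) : ℂ)) ein
        simp only [map_mul, Units.val_mul] at evals
        rw [sq]
        linear_combination l v * evals
      · exact absurd ⟨a, ha, z, hz, mul_left_cancel heq⟩ hnotin
    -- the two components
    set lp : V →ₗ[ℂ] ℂ :=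
      (2⁻¹ : ℂ) • (l + (((ω ⟨h, hh⟩ : ℂˣ) : ℂ)⁻¹) • m) with hlp_def
    set lm : V →ₗ[ℂ] ℂ :=
      (2⁻¹ : ℂ) • (l - (((ω ⟨h, hh⟩ : ℂˣ) : ℂ)⁻¹) • m) with hlm_def
    have hlp_apply : ∀ v, lp v =
        2⁻¹ * (l v + (((ω ⟨h, hh⟩ : ℂˣ) : ℂ)⁻¹) * m v) := by
      intro v
      rw [hlp_def]
      simp only [LinearMap.smul_apply, LinearMap.add_apply, smul_eq_mul]
    have hlm_apply : ∀ v, lm v =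
        2⁻¹ * (l v - (((ω ⟨h, hh⟩ : ℂˣ) : ℂ)⁻¹) * m v) := by
      intro v
      rw [hlm_def]
      simp only [LinearMap.smul_apply, LinearMap.sub_apply, smul_eq_mul]
    -- equivariance of lp, lm on H₁
    have hlp1 : ∀ (a : G) (ha : a ∈ H₁) (v : V),
        lp (π a v) = ((ω ⟨a, hH₁H ha⟩ : ℂˣ) : ℂ) * lp v := by
      intro a ha v
      rw [hlp_apply, hlp_apply, hl a ha, hm1 a ha]
      ring
    have hlm1 : ∀ (a : G) (ha : a ∈ H₁) (v : V),
        lm (π a v) = ((ω ⟨a, hH₁H ha⟩ : ℂˣ) : ℂ) * lm v := by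
      intro a ha v
      rw [hlm_apply, hlm_apply, hl a ha, hm1 a ha]
      ring
    -- behaviour under π h
    have hlp_h : ∀ w : V, lp (π h w) = ((ω ⟨h, hh⟩ : ℂˣ) : ℂ) * lp w := by
      intro w
      rw [hlp_apply, hlp_apply, hm2 w, ← hm_apply]
      field_simp
      ring
    have hlm_h : ∀ w : V, lm (π h w) = -((ω ⟨h, hh⟩ : ℂˣ) : ℂ) * lm w := by
      intro w
      rw [hlm_apply, hlm_apply, hm2 w, ← hm_apply]
      field_simp
      ring
    -- lp ∈ Hom_H(ω)
    have hlpA : lp ∈ homSpace π H ω := by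
      rw [memA]
      intro x hx v
      rcases hcover x hx with ⟨a, ha, z, hz, rfl⟩ | ⟨a, ha, z, hz, rfl⟩
      · rw [hmul, hscalar z hz v]
        simp only [map_smul, smul_eq_mul]
        rw [hlp1 a ha v]
        have ein : (⟨a * z, hx⟩ : H) = ⟨a, hH₁H ha⟩ * ⟨z, hZH hz⟩ := by ext; rfl
        rw [ein, map_mul, Units.val_mul]
        ring
      · rw [hmul, hmul, hscalar z hz v]
        simp only [map_smul, smul_eq_mul]
        rw [hlp_h, hlp1 a ha v]
        have ein : (⟨h * (a * z), hx⟩ : H) =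
            ⟨h, hh⟩ * (⟨a, hH₁H ha⟩ * ⟨z, hZH hz⟩) := by ext; rfl
        rw [ein, map_mul, map_mul, Units.val_mul, Units.val_mul]
        ring
    -- lm ∈ Hom_H(ω')
    have hlmB : lm ∈ homSpace π H ω' := by
      rw [memA]
      intro x hx v
      rcases hcover x hx with ⟨a, ha, z, hz, rfl⟩ | ⟨a, ha, z, hz, rfl⟩
      · rw [hmul, hscalar z hz v]
        simp only [map_smul, smul_eq_mul]
        rw [hlm1 a ha v]
        have ein : (⟨a * z, hx⟩ : H) = ⟨a, hH₁H ha⟩ * ⟨z, hZH hz⟩ := by ext; rfl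
        rw [ein, map_mul, Units.val_mul, ← hagree₁ a ha, ← hagreeZ z hz]
        ring
      · rw [hmul, hmul, hscalar z hz v]
        simp only [map_smul, smul_eq_mul]
        rw [hlm_h, hlm1 a ha v]
        have ein : (⟨h * (a * z), hx⟩ : H) =
            ⟨h, hh⟩ * (⟨a, hH₁H ha⟩ * ⟨z, hZH hz⟩) := by ext; rfl
        rw [ein, map_mul, map_mul, Units.val_mul, Units.val_mul, hsign,
          ← hagree₁ a ha, ← hagreeZ z hz]
        ring
    -- conclude
    have hsum : l = lp + lm := by
      ext v
      rw [LinearMap.add_apply, hlp_apply, hlm_apply]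
      ring
    rw [hsum]
    exact Submodule.add_mem _ (Submodule.mem_sup_left hlpA) (Submodule.mem_sup_right hlmB)
  have heq : homSpace π H₁ (ω.comp (Subgroup.inclusion hH₁H)) =
      homSpace π H ω ⊔ homSpace π H ω' :=
    le_antisymm hCsub (sup_le hAC hBC)
  refine ⟨heq, hdisj, ?_⟩
  have hr := Submodule.rank_sup_add_rank_inf_eq (homSpace π H ω) (homSpace π H ω')
  rw [hdisj.eq_bot] at hr
  rw [heq]
  simpa using hr
end
end

section
/- (Two-orbit computation from the Appendix.) Let B be the subgroup of upper-triangular invertible matrices in GL_2(E) and let GU(w_2)(F) = {h ∈ GL_2(E) : ᵗh̄·w_2·h = λ(h)·w_2 for some λ(h) ∈ F^×}. Then the double coset space B\GL_2(E)/GU(w_2)(F) has exactly 2 elements, represented by I_2 and [[1,0],[1,1]]; that is, GL_2(E) is the disjoint union of the two double cosets B·GU(w_2)(F) and B·[[1,0],[1,1]]·GU(w_2)(F). -/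
noncomputable section

open Matrix

namespace GR

/-- The `n × n` antidiagonal matrix `w_n`. -/
def wMat (E : Type*) [Field E] (n : ℕ) : Matrix (Fin n) (Fin n) E :=
  Matrix.of fun i j => if (i : ℕ) + (j : ℕ) = n - 1 then (1 : E) else 0

/-- The matrix `J_{2n,ε}`, block antidiagonal with middle block `A_ε = diag(-ε, 1)`. -/
def Jmat (E : Type*) [Field E] (n : ℕ) (ε : E) :
    Matrix (Fin (2 * n)) (Fin (2 * n)) E :=
  Matrix.of fun i j =>
    if (i : ℕ) = n - 1 then (if (j : ℕ) = n - 1 then -ε else 0)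
    else if (i : ℕ) = n then (if (j : ℕ) = n then (1 : E) else 0)
    else if (i : ℕ) + (j : ℕ) = 2 * n - 1 then 1 else 0

/-- The similitude equation `ᵗ(σ(g)) * J * g = c • J`. -/
def simEq {E : Type*} [Field E] {m : ℕ} (σ : E → E)
    (J g : Matrix (Fin m) (Fin m) E) (c : E) : Prop :=
  (g.map σ)ᵀ * J * g = c • J

/-- The unitary similitude group `GU(J)(F)`: invertible `g` with
`ᵗ(σ(g)) * J * g = λ(g) • J` for some `λ(g) ∈ F^×`. -/
def GUs (F : Type*) {E : Type*} [Field F] [Field E] [Algebra F E] (σ : E → E)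
    {m : ℕ} (J : Matrix (Fin m) (Fin m) E) : Set (Matrix (Fin m) (Fin m) E) :=
  {g | IsUnit g ∧ ∃ c : F, c ≠ 0 ∧ simEq σ J g (algebraMap F E c)}

/-- The unitary group `U(J)(F)`. -/
def Ugp {E : Type*} [Field E] (σ : E → E) {m : ℕ}
    (J : Matrix (Fin m) (Fin m) E) : Set (Matrix (Fin m) (Fin m) E) :=
  {g | IsUnit g ∧ simEq σ J g 1}

/-- The similitude factor `λ(g)`, as an element of `E` (defined via choice; it is
uniquely determined on `GU(J)(F)`). -/
def lam {E : Type*} [Field E] (σ : E → E) {m : ℕ}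
    (J g : Matrix (Fin m) (Fin m) E) : E :=
  letI := Classical.propDecidable
  if h : ∃ c : E, c ≠ 0 ∧ simEq σ J g c then h.choose else 1

/-- `c ∈ F^×` is a norm from `E^×`. -/
def IsNorm (F : Type*) {E : Type*} [Field F] [Field E] [Algebra F E]
    (σ : E → E) (c : F) : Prop :=
  ∃ t : E, t ≠ 0 ∧ algebraMap F E c = t * σ t

/-- `tr_{E/F}(x)`, as an element of `F` (via choice; well defined when the fixed
field of `σ` is `F`). -/
def trEF (F : Type*) {E : Type*} [Field F] [Field E] [Algebra F E]
    (σ : E → E) (x : E) : F :=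
  letI := Classical.propDecidable
  if h : ∃ a : F, algebraMap F E a = x + σ x then h.choose else 0

def w2 (E : Type*) [Field E] : Matrix (Fin 2) (Fin 2) E := !![0, 1; 1, 0]

/-- `A_ε = diag(-ε, 1)`. -/
def Amat {E : Type*} [Field E] (ε : E) : Matrix (Fin 2) (Fin 2) E := !![-ε, 0; 0, 1]

/-- `J_{6,ε} = [[0, 0, w₂], [0, A_ε, 0], [w₂, 0, 0]]`. -/
def J6 {E : Type*} [Field E] (ε : E) : Matrix (Fin 6) (Fin 6) E :=
  !![0, 0, 0, 0, 0, 1;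
     0, 0, 0, 0, 1, 0;
     0, 0, -ε, 0, 0, 0;
     0, 0, 0, 1, 0, 0;
     0, 1, 0, 0, 0, 0;
     1, 0, 0, 0, 0, 0]

/-- Block diagonal `diag(A, B, C)` with `2 × 2` blocks. -/
def bd3 {E : Type*} [Field E] (A B C : Matrix (Fin 2) (Fin 2) E) :
    Matrix (Fin 6) (Fin 6) E :=
  !![A 0 0, A 0 1, 0, 0, 0, 0;
     A 1 0, A 1 1, 0, 0, 0, 0;
     0, 0, B 0 0, B 0 1, 0, 0;
     0, 0, B 1 0, B 1 1, 0, 0;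
     0, 0, 0, 0, C 0 0, C 0 1;
     0, 0, 0, 0, C 1 0, C 1 1]

/-- `g* = w₂ · ᵗ(σ(g))⁻¹ · w₂`. -/
def gstar {E : Type*} [Field E] (σ : E → E) (g : Matrix (Fin 2) (Fin 2) E) :
    Matrix (Fin 2) (Fin 2) E :=
  w2 E * ((g.map σ)ᵀ)⁻¹ * w2 E

/-- `m(g, h) = diag(g, h, λ(h) • g*)`, where `λ(h)` is computed with respect to the
`2 × 2` Hermitian form `Jh`. -/
def mLevi {E : Type*} [Field E] (σ : E → E) (Jh : Matrix (Fin 2) (Fin 2) E)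
    (g h : Matrix (Fin 2) (Fin 2) E) : Matrix (Fin 6) (Fin 6) E :=
  bd3 g h (lam σ Jh h • gstar σ g)

/-- The unipotent upper triangular matrix `u(X, Y)` with third block `X'`. -/
def uMat {E : Type*} [Field E] (X Y X' : Matrix (Fin 2) (Fin 2) E) :
    Matrix (Fin 6) (Fin 6) E :=
  !![1, 0, X 0 0, X 0 1, Y 0 0, Y 0 1;
     0, 1, X 1 0, X 1 1, Y 1 0, Y 1 1;
     0, 0, 1, 0, X' 0 0, X' 0 1;
     0, 0, 0, 1, X' 1 0, X' 1 1;
     0, 0, 0, 0, 1, 0;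
     0, 0, 0, 0, 0, 1]

/-- `X' = -(A_ε⁻¹ · ᵗX · w₂)`. -/
def Xprime {E : Type*} [Field E] (Aε X : Matrix (Fin 2) (Fin 2) E) :
    Matrix (Fin 2) (Fin 2) E :=
  -(Aε⁻¹ * Xᵀ * w2 E)

/-- The condition `w₂ Y + ᵗY w₂ + ᵗX' A_ε X' = 0`. -/
def Ucond {E : Type*} [Field E] (Aε X Y : Matrix (Fin 2) (Fin 2) E) : Prop :=
  w2 E * Y + Yᵀ * w2 E + (Xprime Aε X)ᵀ * Aε * (Xprime Aε X) = 0

/-- The unipotent radical `U_ε(F)`. -/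
def Uset {E : Type*} [Field E] (Aε : Matrix (Fin 2) (Fin 2) E) :
    Set (Matrix (Fin 6) (Fin 6) E) :=
  {u | ∃ X Y, Ucond Aε X Y ∧ u = uMat X Y (Xprime Aε X)}

/-- The character `ξ_ε(u(X,Y)) = ψ(tr_{E/F}(tr X))`. -/
def xiU (F : Type*) {E : Type*} [Field F] [Field E] [Algebra F E]
    (σ : E → E) (ψ : AddChar F ℂˣ) (u : Matrix (Fin 6) (Fin 6) E) : ℂˣ :=
  ψ (trEF F σ (u 0 2 + u 1 3))

/-- The Levi subgroup `M_ε(F) = {m(g, h)}`. -/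
def Mset (F : Type*) {E : Type*} [Field F] [Field E] [Algebra F E]
    (σ : E → E) (ε : E) : Set (Matrix (Fin 6) (Fin 6) E) :=
  {x | ∃ g h, IsUnit g ∧ h ∈ GUs F σ (Amat ε) ∧ x = mLevi σ (Amat ε) g h}

/-- `H_{0,ε}(F) = {m(h, h)}`. -/
def H0set (F : Type*) {E : Type*} [Field F] [Field E] [Algebra F E]
    (σ : E → E) (ε : E) : Set (Matrix (Fin 6) (Fin 6) E) :=
  {x | ∃ h ∈ GUs F σ (Amat ε), x = mLevi σ (Amat ε) h h}

/-- `H_ε(F) = H_{0,ε}(F) ⋉ U_ε(F)`. -/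
def Hset (F : Type*) {E : Type*} [Field F] [Field E] [Algebra F E]
    (σ : E → E) (ε : E) : Set (Matrix (Fin 6) (Fin 6) E) :=
  {x | ∃ a ∈ H0set F σ ε, ∃ u ∈ Uset (Amat ε), x = a * u}

/-- `H_{1,ε}(F) = H_ε(F) ∩ U(J_{6,ε})(F)`. -/
def H1set (F : Type*) {E : Type*} [Field F] [Field E] [Algebra F E]
    (σ : E → E) (ε : E) : Set (Matrix (Fin 6) (Fin 6) E) :=
  Hset F σ ε ∩ Ugp σ (J6 ε)

/-- The unipotent subgroup `U(F)` of `G(F) = GU(w₆)(F)`. -/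
def UofG (F : Type*) {E : Type*} [Field F] [Field E] [Algebra F E] (σ : E → E) :
    Set (Matrix (Fin 6) (Fin 6) E) :=
  {u | u ∈ GUs F σ (wMat E 6) ∧ ∃ X Y X', u = uMat X Y X'}

/-- `H₀(F) = {diag(h, h, λ(h)·w₂ᵗ(σ h)⁻¹w₂)} ⊆ GU(w₆)(F)`. -/
def H0w (F : Type*) {E : Type*} [Field F] [Field E] [Algebra F E] (σ : E → E) :
    Set (Matrix (Fin 6) (Fin 6) E) :=
  {x | ∃ h ∈ GUs F σ (w2 E), x = mLevi σ (w2 E) h h}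

/-- `H(F) = H₀(F) · U(F) ⊆ GU(w₆)(F)`. -/
def Hw (F : Type*) {E : Type*} [Field F] [Field E] [Algebra F E] (σ : E → E) :
    Set (Matrix (Fin 6) (Fin 6) E) :=
  {x | ∃ a ∈ H0w F σ, ∃ u ∈ UofG F σ, x = a * u}

/-- The double coset `L · x · R`. -/
def dcoset {E : Type*} [Field E] {m : ℕ}
    (L R : Set (Matrix (Fin m) (Fin m) E)) (x : Matrix (Fin m) (Fin m) E) :
    Set (Matrix (Fin m) (Fin m) E) :=
  {y | ∃ p ∈ L, ∃ q ∈ R, y = p * x * q}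

/-- `P(F)`: block upper triangular elements of `GU(w₆)(F)` (2+2+2 blocks). -/
def blockUpperP (F : Type*) {E : Type*} [Field F] [Field E] [Algebra F E] (σ : E → E) :
    Set (Matrix (Fin 6) (Fin 6) E) :=
  {g | g ∈ GUs F σ (wMat E 6) ∧ ∀ i j : Fin 6, (j : ℕ) / 2 < (i : ℕ) / 2 → g i j = 0}

/-- `P̄(F)`: block lower triangular elements of `GU(w₆)(F)` (2+2+2 blocks). -/
def blockLowerP (F : Type*) {E : Type*} [Field F] [Field E] [Algebra F E] (σ : E → E) :
    Set (Matrix (Fin 6) (Fin 6) E) :=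
  {g | g ∈ GUs F σ (wMat E 6) ∧ ∀ i j : Fin 6, (i : ℕ) / 2 < (j : ℕ) / 2 → g i j = 0}

/-- `Q̄(F)`: block lower triangular elements of `GU(w₆)(F)` for `6 = 3 + 3`. -/
def blockLowerQ33 (F : Type*) {E : Type*} [Field F] [Field E] [Algebra F E] (σ : E → E) :
    Set (Matrix (Fin 6) (Fin 6) E) :=
  {g | g ∈ GUs F σ (wMat E 6) ∧ ∀ i j : Fin 6, (i : ℕ) < 3 → 3 ≤ (j : ℕ) → g i j = 0}

/-- `Q'(F)`: block lower triangular elements of `GU(w₆)(F)` for `6 = 1 + 4 + 1`. -/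
def blockLowerQ141 (F : Type*) {E : Type*} [Field F] [Field E] [Algebra F E] (σ : E → E) :
    Set (Matrix (Fin 6) (Fin 6) E) :=
  {g | g ∈ GUs F σ (wMat E 6) ∧ (∀ j : Fin 6, 1 ≤ (j : ℕ) → g 0 j = 0) ∧
    (∀ i : Fin 6, (i : ℕ) ≤ 4 → g i 5 = 0)}

/-- the permutation matrix `w_{(653421)}`. -/
def pm653421 (E : Type*) [Field E] : Matrix (Fin 6) (Fin 6) E :=
  !![0, 0, 0, 0, 0, 1;
     0, 0, 0, 0, 1, 0;
     0, 0, 1, 0, 0, 0;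
     0, 0, 0, 1, 0, 0;
     0, 1, 0, 0, 0, 0;
     1, 0, 0, 0, 0, 0]

/-- the permutation matrix `w_{(623451)}`. -/
def pm623451 (E : Type*) [Field E] : Matrix (Fin 6) (Fin 6) E :=
  !![0, 0, 0, 0, 0, 1;
     0, 1, 0, 0, 0, 0;
     0, 0, 1, 0, 0, 0;
     0, 0, 0, 1, 0, 0;
     0, 0, 0, 0, 1, 0;
     1, 0, 0, 0, 0, 0]

/-- the permutation matrix `w_{(351624)}`. -/
def pm351624 (E : Type*) [Field E] : Matrix (Fin 6) (Fin 6) E :=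
  !![0, 0, 1, 0, 0, 0;
     0, 0, 0, 0, 1, 0;
     1, 0, 0, 0, 0, 0;
     0, 0, 0, 0, 0, 1;
     0, 1, 0, 0, 0, 0;
     0, 0, 0, 1, 0, 0]

/-- the permutation matrix `w_{(321654)}`. -/
def pm321654 (E : Type*) [Field E] : Matrix (Fin 6) (Fin 6) E :=
  !![0, 0, 1, 0, 0, 0;
     0, 1, 0, 0, 0, 0;
     1, 0, 0, 0, 0, 0;
     0, 0, 0, 0, 0, 1;
     0, 0, 0, 0, 1, 0;
     0, 0, 0, 1, 0, 0]

/-- the permutation matrix `w_{(654321)}`. -/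
def pm654321 (E : Type*) [Field E] : Matrix (Fin 6) (Fin 6) E :=
  !![0, 0, 0, 0, 0, 1;
     0, 0, 0, 0, 1, 0;
     0, 0, 0, 1, 0, 0;
     0, 0, 1, 0, 0, 0;
     0, 1, 0, 0, 0, 0;
     1, 0, 0, 0, 0, 0]

/-- the permutation matrix `w_{(124356)}`. -/
def pm124356 (E : Type*) [Field E] : Matrix (Fin 6) (Fin 6) E :=
  !![1, 0, 0, 0, 0, 0;
     0, 1, 0, 0, 0, 0;
     0, 0, 0, 1, 0, 0;
     0, 0, 1, 0, 0, 0;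
     0, 0, 0, 0, 1, 0;
     0, 0, 0, 0, 0, 1]


/-- The upper triangular Borel subgroup of `GL₂(E)`. -/
def Bup (E : Type*) [Field E] : Set (Matrix (Fin 2) (Fin 2) E) :=
  {b | IsUnit b ∧ b 1 0 = 0}


private lemma w2_mul_w2 {E : Type*} [Field E] : w2 E * w2 E = (1 : Matrix (Fin 2) (Fin 2) E) := by
  ext i j
  fin_cases i <;> fin_cases j <;>
    simp [w2, Matrix.mul_apply, Fin.sum_univ_two, Matrix.one_apply]

private lemma sandwich_apply {E : Type*} [Field E] (σ : E → E)
    (q : Matrix (Fin 2) (Fin 2) E) (i j : Fin 2) :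
    ((q.map σ)ᵀ * w2 E * q) i j = σ (q 0 i) * q 1 j + σ (q 1 i) * q 0 j := by
  simp [w2, Matrix.mul_apply, Fin.sum_univ_two, Matrix.map_apply, Matrix.transpose_apply]
  ring

private lemma flip_apply {E : Type*} [Field E] (σ : E → E)
    (q : Matrix (Fin 2) (Fin 2) E) (i j : Fin 2) :
    (q * w2 E * (q.map σ)ᵀ) i j = q i 0 * σ (q j 1) + q i 1 * σ (q j 0) := by
  simp [w2, Matrix.mul_apply, Fin.sum_univ_two, Matrix.map_apply, Matrix.transpose_apply]
  ring

private lemma flip {E : Type*} [Field E] (σ : E → E)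
    (q : Matrix (Fin 2) (Fin 2) E) (c : E) (hq : IsUnit q)
    (h : (q.map σ)ᵀ * w2 E * q = c • w2 E) :
    q * w2 E * (q.map σ)ᵀ = c • w2 E := by
  have hqd : IsUnit q.det := (Matrix.isUnit_iff_isUnit_det q).1 hq
  have hq1 : q * q⁻¹ = 1 := Matrix.mul_nonsing_inv q hqd
  have h2 : (q.map σ)ᵀ = c • (w2 E * (q⁻¹ * w2 E)) := by
    have h1 := congrArg (· * (q⁻¹ * w2 E)) h
    simp only [Matrix.mul_assoc, Matrix.smul_mul] at h1
    rw [← Matrix.mul_assoc q, hq1, one_mul, w2_mul_w2, mul_one] at h1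
    exact h1
  calc q * w2 E * (q.map σ)ᵀ = q * w2 E * (c • (w2 E * (q⁻¹ * w2 E))) := by rw [← h2]
    _ = c • (q * (w2 E * (w2 E * (q⁻¹ * w2 E)))) := by
        rw [Matrix.mul_smul, Matrix.mul_assoc]
    _ = c • (q * (q⁻¹ * w2 E)) := by rw [← Matrix.mul_assoc (w2 E), w2_mul_w2, one_mul]
    _ = c • w2 E := by rw [← Matrix.mul_assoc, hq1, one_mul]

/-- `B\GL₂(E)/GU(w₂)(F)` has exactly 2 elements, represented by `I₂`
and `[[1,0],[1,1]]`, and `GL₂(E)` is their disjoint union. -/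
theorem statement17
    (F E : Type*) [Field F] [Field E] [Algebra F E] [CharZero F]
    (hquad : Module.finrank F E = 2)
    (σ : E ≃ₐ[F] E)
    (hσinv : ∀ x : E, σ (σ x) = x)
    (hσnt : ∃ x : E, σ x ≠ x)
    (hfix : ∀ x : E, σ x = x → ∃ a : F, algebraMap F E a = x) :
    dcoset (Bup E) (GUs F (⇑σ) (w2 E)) 1 ∪
        dcoset (Bup E) (GUs F (⇑σ) (w2 E)) !![1, 0; 1, 1] =
      {g : Matrix (Fin 2) (Fin 2) E | IsUnit g} ∧
    dcoset (Bup E) (GUs F (⇑σ) (w2 E)) 1 ∩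
        dcoset (Bup E) (GUs F (⇑σ) (w2 E)) !![1, 0; 1, 1] = ∅ ∧
    (1 : Matrix (Fin 2) (Fin 2) E) ∈ dcoset (Bup E) (GUs F (⇑σ) (w2 E)) 1 ∧
    (!![1, 0; 1, 1] : Matrix (Fin 2) (Fin 2) E) ∈
      dcoset (Bup E) (GUs F (⇑σ) (w2 E)) !![1, 0; 1, 1] := by
  classical
  have hinj : Function.Injective (algebraMap F E) := (algebraMap F E).injective
  have h2F : (2 : F) ≠ 0 := two_ne_zero
  have h2E : (2 : E) ≠ 0 := by
    have h : algebraMap F E 2 = (2 : E) := _root_.map_ofNat _ 2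
    intro h0
    exact h2F (hinj (by rw [h, h0, _root_.map_zero]))
  have hσne : ∀ x : E, x ≠ 0 → σ x ≠ 0 := fun x hx h =>
    hx (σ.injective (by rw [h, _root_.map_zero]))
  have hu_unit : IsUnit (!![1, 0; 1, 1] : Matrix (Fin 2) (Fin 2) E) := by
    apply (Matrix.isUnit_iff_isUnit_det _).2
    simp [Matrix.det_fin_two_of]
  have hw2_unit : IsUnit (w2 E) := by
    apply (Matrix.isUnit_iff_isUnit_det _).2
    rw [show (w2 E).det = -1 by simp [w2, Matrix.det_fin_two_of]]
    exact isUnit_one.neg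
  have hone_mem : (1 : Matrix (Fin 2) (Fin 2) E) ∈ GUs F (⇑σ) (w2 E) := by
    refine ⟨isUnit_one, 1, one_ne_zero, ?_⟩
    unfold simEq
    rw [_root_.map_one, one_smul, Matrix.map_one _ (_root_.map_zero σ) (_root_.map_one σ),
      Matrix.transpose_one, one_mul, mul_one]
  have hw2_mem : w2 E ∈ GUs F (⇑σ) (w2 E) := by
    refine ⟨hw2_unit, 1, one_ne_zero, ?_⟩
    show _ = _
    rw [_root_.map_one, one_smul]
    ext i j
    rw [sandwich_apply]
    fin_cases i <;> fin_cases j <;> simp [w2]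
  have hBone : (1 : Matrix (Fin 2) (Fin 2) E) ∈ Bup E :=
    ⟨isUnit_one, Matrix.one_apply_ne (by decide)⟩
  refine ⟨?_, ?_, ⟨1, hBone, 1, hone_mem, by simp⟩,
    ⟨1, hBone, 1, hone_mem, by simp⟩⟩
  · -- union = units
    ext g
    simp only [Set.mem_union, Set.mem_setOf_eq]
    constructor
    · rintro (⟨p, ⟨hpu, -⟩, q, ⟨hqu, -⟩, rfl⟩ | ⟨p, ⟨hpu, -⟩, q, ⟨hqu, -⟩, rfl⟩)
      · exact (hpu.mul isUnit_one).mul hqu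
      · exact (hpu.mul hu_unit).mul hqu
    · intro hg
      have hdet : g.det ≠ 0 := by
        intro h0
        have := (Matrix.isUnit_iff_isUnit_det g).1 hg
        rw [h0] at this
        simpa using this
      by_cases hQ : g 1 0 * σ (g 1 1) + g 1 1 * σ (g 1 0) = 0
      · left
        by_cases h11 : g 1 1 = 0
        · refine ⟨g * w2 E, ⟨hg.mul hw2_unit, ?_⟩, w2 E, hw2_mem, ?_⟩
          · simp [Matrix.mul_apply, Fin.sum_univ_two, w2, h11]
          · rw [mul_one, Matrix.mul_assoc, w2_mul_w2, mul_one]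
        · obtain ⟨s, hsdef⟩ : ∃ s : E, s = g 1 0 / g 1 1 := ⟨_, rfl⟩
          have hgs : s * g 1 1 = g 1 0 := by rw [hsdef]; exact div_mul_cancel₀ _ h11
          have hσgs : σ s * σ (g 1 1) = σ (g 1 0) := by rw [← _root_.map_mul, hgs]
          have hσ11 : σ (g 1 1) ≠ 0 := hσne _ h11
          have hne : g 1 1 * σ (g 1 1) ≠ 0 := mul_ne_zero h11 hσ11
          have hs : s + σ s = 0 := by
            apply mul_left_cancel₀ hne
            rw [mul_zero]
            linear_combination hQ + σ (g 1 1) * hgs + g 1 1 * hσgs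
          refine ⟨!![g 0 0 - s * g 0 1, g 0 1; 0, g 1 1], ⟨?_, by simp⟩,
            !![1, 0; s, 1], ⟨?_, 1, one_ne_zero, ?_⟩, ?_⟩
          · apply (Matrix.isUnit_iff_isUnit_det _).2
            rw [Matrix.det_fin_two_of]
            apply isUnit_iff_ne_zero.2
            intro h0
            apply hdet
            rw [Matrix.det_fin_two]
            linear_combination h0 + g 0 1 * hgs
          · apply (Matrix.isUnit_iff_isUnit_det _).2
            simp [Matrix.det_fin_two_of]
          · show _ = _
            rw [_root_.map_one, one_smul]
            ext i j
            rw [sandwich_apply]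
            fin_cases i <;> fin_cases j <;> simp [w2] <;> linear_combination hs
          · rw [mul_one]
            ext i j
            fin_cases i <;> fin_cases j <;>
              simp [Matrix.mul_apply, Fin.sum_univ_two] <;>
              first
                | ring1
                | linear_combination hgs
                | linear_combination -hgs
      · right
        have h11 : g 1 1 ≠ 0 := by
          intro h0
          apply hQ
          rw [h0, _root_.map_zero]
          ring
        obtain ⟨s, hsdef⟩ : ∃ s : E, s = g 1 0 / g 1 1 := ⟨_, rfl⟩
        have hgs : s * g 1 1 = g 1 0 := by rw [hsdef]; exact div_mul_cancel₀ _ h11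
        have hσgs : σ s * σ (g 1 1) = σ (g 1 0) := by rw [← _root_.map_mul, hgs]
        have hσ11 : σ (g 1 1) ≠ 0 := hσne _ h11
        have hτ : s + σ s ≠ 0 := by
          intro h0
          apply hQ
          linear_combination (g 1 1 * σ (g 1 1)) * h0 - σ (g 1 1) * hgs - g 1 1 * hσgs
        have hστ : σ (s + σ s) = s + σ s := by rw [_root_.map_add, hσinv]; ring
        obtain ⟨a, ha⟩ := hfix _ hστ
        have haz : a ≠ 0 := by
          intro h0
          rw [h0, _root_.map_zero] at ha
          exact hτ ha.symm
        have ha2 : algebraMap F E (2 * a) = 2 * (s + σ s) := by rw [_root_.map_mul, ha, _root_.map_ofNat]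
        refine ⟨!![(g 0 0 - s * g 0 1) / (s + σ s), g 0 1 / 2; 0, g 1 1 / 2], ⟨?_, by simp⟩,
          !![s + σ s, 0; s - σ s, 2], ⟨?_, 2 * a, mul_ne_zero h2F haz, ?_⟩, ?_⟩
        · apply (Matrix.isUnit_iff_isUnit_det _).2
          rw [Matrix.det_fin_two_of]
          apply isUnit_iff_ne_zero.2
          intro h0
          apply hdet
          rw [Matrix.det_fin_two]
          field_simp [hτ] at h0
          linear_combination h0 + g 0 1 * hgs
        · apply (Matrix.isUnit_iff_isUnit_det _).2
          rw [Matrix.det_fin_two_of]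
          apply isUnit_iff_ne_zero.2
          intro h0
          exact (mul_ne_zero hτ h2E) (by linear_combination h0)
        · show _ = _
          ext i j
          rw [sandwich_apply]
          fin_cases i <;> fin_cases j <;>
            simp [w2, Matrix.smul_apply, hσinv, ha2, _root_.map_add, _root_.map_sub, _root_.map_ofNat] <;> ring
        · ext i j
          fin_cases i <;> fin_cases j <;>
            simp [Matrix.mul_apply, Fin.sum_univ_two] <;>
            field_simp <;>
            first
              | ring1
              | linear_combination 2 * hgs
              | linear_combination -2 * hgs
              | linear_combination hgs
              | linear_combination -hgs
              | linear_combination (2 : E) * (s + σ s) * hgs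
  · -- disjoint
    ext g
    simp only [Set.mem_inter_iff, Set.mem_empty_iff_false, iff_false, not_and]
    rintro ⟨b1, ⟨hb1u, hb1l⟩, q1, ⟨hq1u, c1, hc1, hs1⟩, hg1⟩
    rintro ⟨b2, ⟨hb2u, hb2l⟩, q2, ⟨hq2u, c2, hc2, hs2⟩, hg2⟩
    have hs1' : (q1.map ⇑σ)ᵀ * w2 E * q1 = algebraMap F E c1 • w2 E := hs1
    have hs2' : (q2.map ⇑σ)ᵀ * w2 E * q2 = algebraMap F E c2 • w2 E := hs2
    have f1 := flip (⇑σ) q1 _ hq1u hs1'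
    have f2 := flip (⇑σ) q2 _ hq2u hs2'
    have ent1 : q1 1 0 * σ (q1 1 1) + q1 1 1 * σ (q1 1 0) = 0 := by
      have h := Matrix.ext_iff.2 f1 1 1
      rw [flip_apply] at h
      simpa [w2, Matrix.smul_apply, smul_eq_mul] using h
    have ent2 : ∀ i j : Fin 2,
        q2 i 0 * σ (q2 j 1) + q2 i 1 * σ (q2 j 0) = algebraMap F E c2 * w2 E i j := by
      intro i j
      have h := Matrix.ext_iff.2 f2 i j
      rw [flip_apply] at h
      simpa [Matrix.smul_apply, smul_eq_mul] using h
    have e00 : q2 0 0 * σ (q2 0 1) + q2 0 1 * σ (q2 0 0) = 0 := by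
      simpa [w2] using ent2 0 0
    have e01 : q2 0 0 * σ (q2 1 1) + q2 0 1 * σ (q2 1 0) = algebraMap F E c2 := by
      simpa [w2] using ent2 0 1
    have e10 : q2 1 0 * σ (q2 0 1) + q2 1 1 * σ (q2 0 0) = algebraMap F E c2 := by
      simpa [w2] using ent2 1 0
    have e11 : q2 1 0 * σ (q2 1 1) + q2 1 1 * σ (q2 1 0) = 0 := by
      simpa [w2] using ent2 1 1
    have hg10a : g 1 0 = b1 1 1 * q1 1 0 := by
      rw [hg1, mul_one]
      simp [Matrix.mul_apply, Fin.sum_univ_two, hb1l]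
    have hg11a : g 1 1 = b1 1 1 * q1 1 1 := by
      rw [hg1, mul_one]
      simp [Matrix.mul_apply, Fin.sum_univ_two, hb1l]
    have hg10b : g 1 0 = b2 1 1 * (q2 0 0 + q2 1 0) := by
      rw [hg2]
      simp [Matrix.mul_apply, Fin.sum_univ_two, hb1l, hb2l]
      ring
    have hg11b : g 1 1 = b2 1 1 * (q2 0 1 + q2 1 1) := by
      rw [hg2]
      simp [Matrix.mul_apply, Fin.sum_univ_two, hb1l, hb2l]
      ring
    have key1 : g 1 0 * σ (g 1 1) + g 1 1 * σ (g 1 0) = 0 := by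
      rw [hg10a, hg11a, _root_.map_mul, _root_.map_mul]
      linear_combination (b1 1 1 * σ (b1 1 1)) * ent1
    have key2 : g 1 0 * σ (g 1 1) + g 1 1 * σ (g 1 0)
        = b2 1 1 * σ (b2 1 1) * (2 * algebraMap F E c2) := by
      rw [hg10b, hg11b, _root_.map_mul, _root_.map_mul, _root_.map_add, _root_.map_add]
      linear_combination (b2 1 1 * σ (b2 1 1)) * (e00 + e01 + e10 + e11)
    have hb2ne : b2 1 1 ≠ 0 := by
      intro h0
      have hd : b2.det = 0 := by
        rw [Matrix.det_fin_two, hb2l, h0]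
        ring
      have := (Matrix.isUnit_iff_isUnit_det b2).1 hb2u
      rw [hd] at this
      simpa using this
    have hca : algebraMap F E c2 ≠ 0 := fun h => hc2 (hinj (by rw [h, _root_.map_zero]))
    exact (mul_ne_zero (mul_ne_zero hb2ne (hσne _ hb2ne)) (mul_ne_zero h2E hca))
      (key2.symm.trans key1)
end GR
end
end

section
/- (Three-orbit computation from the Appendix.) Let B be the subgroup of upper-triangular invertible matrices in GL_2(E), and let B̄_0(F) be the subgroup of lower-triangular matrices in GU(w_2)(F) = {h ∈ GL_2(E) : ᵗh̄·w_2·h = λ(h)·w_2 for some λ(h) ∈ F^×}. Then the double coset space B\GL_2(E)/B̄_0(F) has exactly 3 elements, represented by I_2, w_2 = [[0,1],[1,0]], and [[1,0],[1,1]]; that is, GL_2(E) is the disjoint union of the three double cosets B·B̄_0(F), B·w_2·B̄_0(F) and B·[[1,0],[1,1]]·B̄_0(F). -/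
noncomputable section

open Matrix

namespace GR

/-- The lower triangular Borel subgroup `B̄₀(F)` of `GU(w₂)(F)`. -/
def Bbar0 (F : Type*) {E : Type*} [Field F] [Field E] [Algebra F E] (σ : E → E) :
    Set (Matrix (Fin 2) (Fin 2) E) :=
  {h | h ∈ GUs F σ (w2 E) ∧ h 0 1 = 0}

/-! The double coset of `g` is read off its bottom row `v = g 1`. Left multiplication by `B` scales
`v` by `b₁₁ ≠ 0`; right multiplication by `q ∈ B̄₀(F)` sends `v` to `v q`, which preserves
`v₁ = 0` (as `q₀₁ = 0`) and multiplies the hermitian form `H(v) = v₀ v̄₁ + v̄₀ v₁` of `w₂` by the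
similitude factor. Hence whether `v₁ = 0` and whether `H(v) = 0` are invariants; on the bottom
rows `(0,1)`, `(1,0)`, `(1,1)` of the three representatives they take different values, the last
because `H(1,1) = 2 ≠ 0`.

Conversely, `g ∈ B·h` as soon as the bottom rows of `g` and `h` are proportional, so it suffices to
move the bottom row of a representative by some `q ∈ B̄₀(F)` onto the line of `v`. The matrices
`[[1,0],[t,d]]` with `t + t̄ = 0` and `d ∈ F^×` lie in `B̄₀(F)` and do this; in the anisotropic case
`d` comes from `s + s̄ ∈ F^×`, where `s = v₀ / v₁`. -/

section

variable {F E : Type*} [Field F] [Field E] [Algebra F E]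

lemma isUnit_w2 : IsUnit (w2 E) := by
  simp [w2, isUnit_iff_isUnit_det, det_fin_two_of]

lemma isUnit_lowerUnipotent_one : IsUnit (!![1, 0; 1, 1] : Matrix (Fin 2) (Fin 2) E) := by
  simp [isUnit_iff_isUnit_det, det_fin_two_of]

lemma simEq_w2_apply {σ : E → E} {q : Matrix (Fin 2) (Fin 2) E} {c : E}
    (h : simEq σ (w2 E) q c) (i j : Fin 2) :
    σ (q 0 i) * q 1 j + σ (q 1 i) * q 0 j = c * w2 E i j := by
  have hij := congrFun (congrFun h i) j
  fin_cases i <;> fin_cases j <;>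
    simp [w2, mul_apply, Fin.sum_univ_two] at hij ⊢ <;> linear_combination hij

lemma one_mem_Bup : (1 : Matrix (Fin 2) (Fin 2) E) ∈ Bup E :=
  ⟨isUnit_one, one_apply_ne (by decide)⟩

lemma Bup.apply_one_one_ne_zero {b : Matrix (Fin 2) (Fin 2) E} (hb : b ∈ Bup E) :
    b 1 1 ≠ 0 := by
  have hdet := (isUnit_iff_isUnit_det b).mp hb.1
  rw [det_fin_two, hb.2, mul_zero, sub_zero, isUnit_iff_ne_zero] at hdet
  exact right_ne_zero_of_mul hdet

lemma Bup.mul_row_one {b : Matrix (Fin 2) (Fin 2) E} (hb : b ∈ Bup E)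
    (g : Matrix (Fin 2) (Fin 2) E) : (b * g) 1 = b 1 1 • g 1 := by
  ext j
  simp [mul_apply, Fin.sum_univ_two, hb.2]

lemma mul_inv_mem_Bup {g h : Matrix (Fin 2) (Fin 2) E} (hg : IsUnit g) (hh : IsUnit h) {k : E}
    (hrow : g 1 = k • h 1) : g * h⁻¹ ∈ Bup E := by
  refine ⟨hg.mul (isUnit_nonsing_inv_iff.mpr hh), ?_⟩
  have hhinv : h * h⁻¹ = 1 := mul_nonsing_inv h ((isUnit_iff_isUnit_det h).mp hh)
  calc (g * h⁻¹) 1 0 = k * (h * h⁻¹) 1 0 := by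
        simp [mul_apply_eq_vecMul, hrow, smul_vecMul]
    _ = 0 := by simp [hhinv]

lemma Bbar0.diag_ne_zero {σ : E → E} {q : Matrix (Fin 2) (Fin 2) E} (hq : q ∈ Bbar0 F σ) :
    q 0 0 ≠ 0 ∧ q 1 1 ≠ 0 := by
  have hdet := (isUnit_iff_isUnit_det q).mp hq.1.1
  rw [det_fin_two, hq.2, zero_mul, sub_zero, isUnit_iff_ne_zero] at hdet
  exact mul_ne_zero_iff.mp hdet

section dcoset

variable {σ : E → E} {g x : Matrix (Fin 2) (Fin 2) E}

lemma isUnit_of_mem_dcoset (hx : IsUnit x) (hg : g ∈ dcoset (Bup E) (Bbar0 F σ) x) :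
    IsUnit g := by
  obtain ⟨b, hb, q, hq, rfl⟩ := hg
  exact (hb.1.mul hx).mul hq.1.1

lemma apply_one_one_eq_zero_iff_of_mem_dcoset (hg : g ∈ dcoset (Bup E) (Bbar0 F σ) x) :
    g 1 1 = 0 ↔ x 1 1 = 0 := by
  obtain ⟨b, hb, q, hq, rfl⟩ := hg
  have hentry : (b * x * q) 1 1 = b 1 1 * x 1 1 * q 1 1 := by
    rw [mul_apply_eq_vecMul, Bup.mul_row_one hb]
    simp [vecMul, dotProduct, Fin.sum_univ_two, hq.2, mul_assoc]
  rw [hentry, mul_eq_zero, mul_eq_zero, or_iff_right (Bup.apply_one_one_ne_zero hb),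
    or_iff_left (Bbar0.diag_ne_zero hq).2]

lemma mem_dcoset_of_row_one_eq_smul {q : Matrix (Fin 2) (Fin 2) E} (hg : IsUnit g)
    (hx : IsUnit x) (hq : q ∈ Bbar0 F σ) {k : E} (hrow : g 1 = k • (x * q) 1) :
    g ∈ dcoset (Bup E) (Bbar0 F σ) x := by
  have hxq : IsUnit (x * q) := hx.mul hq.1.1
  refine ⟨g * (x * q)⁻¹, mul_inv_mem_Bup hg hxq hrow, q, hq, ?_⟩
  rw [mul_assoc _ x q, nonsing_inv_mul_cancel_right _ _ ((isUnit_iff_isUnit_det _).mp hxq)]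

end dcoset

def w2Form {S : Type*} [FunLike S E E] (σ : S) (v : Fin 2 → E) : E :=
  v 0 * σ (v 1) + σ (v 0) * v 1

lemma eq_smul_vecCons_one {v : Fin 2 → E} (hv : v 1 ≠ 0) : v = v 1 • ![v 0 / v 1, 1] := by
  ext j
  fin_cases j <;> simp [mul_div_cancel₀ _ hv]

section RingHomClass

variable {S : Type*} [FunLike S E E] [RingHomClass S E E] (σ : S)

lemma w2Form_smul (k : E) (v : Fin 2 → E) : w2Form σ (k • v) = k * σ k * w2Form σ v := by
  simp only [w2Form, Pi.smul_apply, smul_eq_mul, map_mul]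
  ring

lemma w2Form_vecCons_one (s : E) : w2Form σ ![s, 1] = s + σ s := by
  simp [w2Form]

lemma w2Form_eq_mul_add_conj {v : Fin 2 → E} (hv : v 1 ≠ 0) :
    w2Form σ v = v 1 * σ (v 1) * (v 0 / v 1 + σ (v 0 / v 1)) := by
  conv_lhs => rw [eq_smul_vecCons_one hv]
  rw [w2Form_smul, w2Form_vecCons_one]

lemma one_mem_Bbar0 : (1 : Matrix (Fin 2) (Fin 2) E) ∈ Bbar0 F ⇑σ := by
  refine ⟨⟨isUnit_one, 1, one_ne_zero, ?_⟩, one_apply_ne (by decide)⟩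
  simp [simEq]

lemma self_mem_dcoset (x : Matrix (Fin 2) (Fin 2) E) : x ∈ dcoset (Bup E) (Bbar0 F ⇑σ) x :=
  ⟨1, one_mem_Bup, 1, one_mem_Bbar0 σ, by simp⟩

lemma Bbar0.w2Form_vecMul {q : Matrix (Fin 2) (Fin 2) E} (hq : q ∈ Bbar0 F ⇑σ) :
    ∃ c : E, c ≠ 0 ∧ ∀ v, w2Form σ (v ᵥ* q) = c * w2Form σ v := by
  obtain ⟨hq00, -⟩ := Bbar0.diag_ne_zero hq
  obtain ⟨⟨-, c, hc, hsim⟩, hq01⟩ := hq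
  have e00 := simEq_w2_apply hsim 0 0
  have e01 := simEq_w2_apply hsim 0 1
  have e10 := simEq_w2_apply hsim 1 0
  simp only [w2, of_apply, cons_val', cons_val_zero, cons_val_one, empty_val',
    cons_val_fin_one, hq01, map_zero, zero_mul, zero_add, add_zero, mul_zero, mul_one]
    at e00 e01 e10
  -- the bottom row of `q` is isotropic
  have hiso : q 1 0 * σ (q 1 1) + σ (q 1 0) * q 1 1 = 0 := by
    have hσq00 : σ (q 0 0) ≠ 0 := (map_ne_zero σ).mpr hq00
    refine (mul_eq_zero.mp ?_).resolve_right (mul_ne_zero hq00 hσq00)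
    linear_combination (q 1 0 * σ (q 0 0)) * e10 + (σ (q 1 0) * q 0 0) * e01 +
      algebraMap F E c * e00
  refine ⟨algebraMap F E c, (map_ne_zero _).mpr hc, fun v => ?_⟩
  simp only [w2Form, vecMul, dotProduct, Fin.sum_univ_two, hq01, mul_zero, map_add, map_mul,
    map_zero]
  linear_combination (v 0 * σ (v 1)) * e10 + (σ (v 0) * v 1) * e01 + (v 1 * σ (v 1)) * hiso

lemma w2Form_eq_zero_iff_of_mem_dcoset {x g : Matrix (Fin 2) (Fin 2) E}
    (hg : g ∈ dcoset (Bup E) (Bbar0 F ⇑σ) x) : w2Form σ (g 1) = 0 ↔ w2Form σ (x 1) = 0 := by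
  obtain ⟨b, hb, q, hq, rfl⟩ := hg
  obtain ⟨c, hc, hform⟩ := Bbar0.w2Form_vecMul σ hq
  have hb11 := Bup.apply_one_one_ne_zero hb
  rw [mul_apply_eq_vecMul, Bup.mul_row_one hb, hform, w2Form_smul]
  simp [hc, hb11]

lemma dcoset_inter_eq_empty {x y : Matrix (Fin 2) (Fin 2) E}
    (hxy : (x 1 1 = 0 ↔ y 1 1 = 0) → (w2Form σ (x 1) = 0 ↔ w2Form σ (y 1) = 0) → False) :
    dcoset (Bup E) (Bbar0 F ⇑σ) x ∩ dcoset (Bup E) (Bbar0 F ⇑σ) y = ∅ := by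
  refine Set.eq_empty_of_forall_notMem fun g ⟨hgx, hgy⟩ => hxy ?_ ?_
  · rw [← apply_one_one_eq_zero_iff_of_mem_dcoset hgx, apply_one_one_eq_zero_iff_of_mem_dcoset hgy]
  · rw [← w2Form_eq_zero_iff_of_mem_dcoset σ hgx, w2Form_eq_zero_iff_of_mem_dcoset σ hgy]

lemma mem_dcoset_w2_of_apply_one_one_eq_zero {g : Matrix (Fin 2) (Fin 2) E} (hg : IsUnit g)
    (h11 : g 1 1 = 0) : g ∈ dcoset (Bup E) (Bbar0 F ⇑σ) (w2 E) := by
  refine mem_dcoset_of_row_one_eq_smul (k := g 1 0) hg isUnit_w2 (one_mem_Bbar0 σ) ?_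
  ext j
  fin_cases j <;> simp [w2, h11]

end RingHomClass

section AlgHomClass

variable {S : Type*} [FunLike S E E] [AlgHomClass S F E E] (σ : S)

lemma lowerUnipotent_mem_Bbar0 {t : E} (ht : t + σ t = 0) {c : F} (hc : c ≠ 0) :
    !![1, 0; t, algebraMap F E c] ∈ Bbar0 F ⇑σ := by
  refine ⟨⟨?_, c, hc, ?_⟩, rfl⟩
  · simp [isUnit_iff_isUnit_det, det_fin_two_of, hc]
  · ext i j
    fin_cases i <;> fin_cases j <;> simp [w2, mul_apply, Fin.sum_univ_two, AlgHomClass.commutes]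
    linear_combination ht

lemma mem_dcoset_one_of_w2Form_eq_zero {g : Matrix (Fin 2) (Fin 2) E} (hg : IsUnit g)
    (h11 : g 1 1 ≠ 0) (hH : w2Form σ (g 1) = 0) : g ∈ dcoset (Bup E) (Bbar0 F ⇑σ) 1 := by
  set s := g 1 0 / g 1 1
  have hs : s + σ s = 0 := by
    rw [w2Form_eq_mul_add_conj σ h11] at hH
    exact (mul_eq_zero.mp hH).resolve_left (mul_ne_zero h11 ((map_ne_zero σ).mpr h11))
  refine mem_dcoset_of_row_one_eq_smul (k := g 1 1) hg isUnit_one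
    (lowerUnipotent_mem_Bbar0 σ hs one_ne_zero) ?_
  ext j
  fin_cases j <;> simp [s, mul_div_cancel₀ _ h11]

lemma mem_dcoset_of_w2Form_ne_zero (hσinv : ∀ x : E, σ (σ x) = x)
    (hfix : ∀ x : E, σ x = x → ∃ a : F, algebraMap F E a = x) (h2 : (2 : E) ≠ 0)
    {g : Matrix (Fin 2) (Fin 2) E} (hg : IsUnit g) (h11 : g 1 1 ≠ 0) (hH : w2Form σ (g 1) ≠ 0) :
    g ∈ dcoset (Bup E) (Bbar0 F ⇑σ) !![1, 0; 1, 1] := by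
  set s := g 1 0 / g 1 1
  obtain ⟨a, ha⟩ := hfix (s + σ s) (by rw [map_add, hσinv, add_comm])
  have ha0 : a ≠ 0 := by
    rintro rfl
    rw [w2Form_eq_mul_add_conj σ h11, ← ha, map_zero, mul_zero] at hH
    exact hH rfl
  set d := algebraMap F E (2 / a)
  have hd : d * algebraMap F E a = 2 := by
    rw [← map_mul, div_mul_cancel₀ _ ha0, map_ofNat]
  have hd0 : d ≠ 0 := left_ne_zero_of_mul (hd ▸ h2)
  have ht : (s * d - 1) + σ (s * d - 1) = 0 := by
    rw [map_sub, map_mul, AlgHomClass.commutes, map_one]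
    linear_combination hd - d * ha
  have hq : !![1, 0; s * d - 1, d] ∈ Bbar0 F ⇑σ :=
    lowerUnipotent_mem_Bbar0 σ ht (ne_zero_of_map (f := algebraMap F E) hd0)
  refine mem_dcoset_of_row_one_eq_smul (k := g 1 1 / d) hg isUnit_lowerUnipotent_one hq ?_
  ext j
  fin_cases j <;> simp [s] <;> field_simp

end AlgHomClass

end

theorem statement18_general
    (F E : Type*) [Field F] [Field E] [Algebra F E] [CharZero F]
    (σ : E ≃ₐ[F] E)
    (hσinv : ∀ x : E, σ (σ x) = x)
    (hfix : ∀ x : E, σ x = x → ∃ a : F, algebraMap F E a = x) :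
    dcoset (Bup E) (Bbar0 F (⇑σ)) 1 ∪ dcoset (Bup E) (Bbar0 F (⇑σ)) (w2 E) ∪
        dcoset (Bup E) (Bbar0 F (⇑σ)) !![1, 0; 1, 1] =
      {g : Matrix (Fin 2) (Fin 2) E | IsUnit g} ∧
    dcoset (Bup E) (Bbar0 F (⇑σ)) 1 ∩ dcoset (Bup E) (Bbar0 F (⇑σ)) (w2 E) = ∅ ∧
    dcoset (Bup E) (Bbar0 F (⇑σ)) 1 ∩ dcoset (Bup E) (Bbar0 F (⇑σ)) !![1, 0; 1, 1] = ∅ ∧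
    dcoset (Bup E) (Bbar0 F (⇑σ)) (w2 E) ∩
        dcoset (Bup E) (Bbar0 F (⇑σ)) !![1, 0; 1, 1] = ∅ ∧
    (1 : Matrix (Fin 2) (Fin 2) E) ∈ dcoset (Bup E) (Bbar0 F (⇑σ)) 1 ∧
    w2 E ∈ dcoset (Bup E) (Bbar0 F (⇑σ)) (w2 E) ∧
    (!![1, 0; 1, 1] : Matrix (Fin 2) (Fin 2) E) ∈
      dcoset (Bup E) (Bbar0 F (⇑σ)) !![1, 0; 1, 1] := by
  have h2 : (2 : E) ≠ 0 := by
    have := charZero_of_injective_algebraMap (algebraMap F E).injective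
    exact two_ne_zero
  refine ⟨?_, dcoset_inter_eq_empty σ ?_, dcoset_inter_eq_empty σ ?_, dcoset_inter_eq_empty σ ?_,
    self_mem_dcoset σ _, self_mem_dcoset σ _, self_mem_dcoset σ _⟩
  · ext g
    refine ⟨?_, fun hg => ?_⟩
    · rintro ((hg | hg) | hg)
      exacts [isUnit_of_mem_dcoset isUnit_one hg, isUnit_of_mem_dcoset isUnit_w2 hg,
        isUnit_of_mem_dcoset isUnit_lowerUnipotent_one hg]
    by_cases h11 : g 1 1 = 0
    · exact Or.inl (Or.inr (mem_dcoset_w2_of_apply_one_one_eq_zero σ hg h11))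
    by_cases hH : w2Form σ (g 1) = 0
    · exact Or.inl (Or.inl (mem_dcoset_one_of_w2Form_eq_zero σ hg h11 hH))
    · exact Or.inr (mem_dcoset_of_w2Form_ne_zero σ hσinv hfix h2 hg h11 hH)
  all_goals simp [w2Form, w2, one_add_one_eq_two, h2]

/-- `B\GL₂(E)/B̄₀(F)` has exactly 3 elements, represented by `I₂`,
`w₂` and `[[1,0],[1,1]]`, and `GL₂(E)` is their disjoint union. -/
theorem statement18
    (F E : Type*) [Field F] [Field E] [Algebra F E] [CharZero F]
    (hquad : Module.finrank F E = 2)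
    (σ : E ≃ₐ[F] E)
    (hσinv : ∀ x : E, σ (σ x) = x)
    (hσnt : ∃ x : E, σ x ≠ x)
    (hfix : ∀ x : E, σ x = x → ∃ a : F, algebraMap F E a = x) :
    dcoset (Bup E) (Bbar0 F (⇑σ)) 1 ∪ dcoset (Bup E) (Bbar0 F (⇑σ)) (w2 E) ∪
        dcoset (Bup E) (Bbar0 F (⇑σ)) !![1, 0; 1, 1] =
      {g : Matrix (Fin 2) (Fin 2) E | IsUnit g} ∧
    dcoset (Bup E) (Bbar0 F (⇑σ)) 1 ∩ dcoset (Bup E) (Bbar0 F (⇑σ)) (w2 E) = ∅ ∧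
    dcoset (Bup E) (Bbar0 F (⇑σ)) 1 ∩ dcoset (Bup E) (Bbar0 F (⇑σ)) !![1, 0; 1, 1] = ∅ ∧
    dcoset (Bup E) (Bbar0 F (⇑σ)) (w2 E) ∩
        dcoset (Bup E) (Bbar0 F (⇑σ)) !![1, 0; 1, 1] = ∅ ∧
    (1 : Matrix (Fin 2) (Fin 2) E) ∈ dcoset (Bup E) (Bbar0 F (⇑σ)) 1 ∧
    w2 E ∈ dcoset (Bup E) (Bbar0 F (⇑σ)) (w2 E) ∧
    (!![1, 0; 1, 1] : Matrix (Fin 2) (Fin 2) E) ∈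
      dcoset (Bup E) (Bbar0 F (⇑σ)) !![1, 0; 1, 1] :=
  statement18_general F E σ hσinv hfix
end GR
end
end
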